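/- Let k : [0,∞) → ℝ be any function such that for every m ≥ 0, k(m) ∈ [π/4, π/2) and m·sin(2k(m)) + k(m)·cos(2k(m)) = 0, set E(m) = √(m² + k(m)²), u₁^m(t) = (k(m)·cos(k(m)(t+1)) + (E(m)+m)·sin(k(m)(t+1)), k(m)·cos(k(m)(t+1)) − (E(m)−m)·sin(k(m)(t+1))), N_m = (∫_{−1}^{1} |u₁^m(t)|²_{ℂ²} dt)^{−1/2}, φ₁^{m,+} = N_m·u₁^m, and φ₁^{m,−}(t) = (φ₁^{m,+}₂(t), φ₁^{m,+}₁(t)). Then there exist constants C > 0 and m₀ > 0 such that for all m ∈ [0, m₀] and all t ∈ [−1,1] there holds |φ₁^{m,+}(t) − φ₁⁺(t)|_{ℂ²} ≤ C·m and |φ₁^{m,−}(t) − φ₁⁻(t)|_{ℂ²} ≤ C·m. -/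

import Mathlib

/-!
The dispersion relation `m sin 2k + k cos 2k = 0` forces `k(m) = π/4 + O(m)`, hence also
`E(m) = π/4 + O(m)`, so `u₁^m` is uniformly `O(m)`-close to the limit profile
`(π/4) (cos + sin, cos - sin)(π(t+1)/4)`, whose pointwise norm is the constant `π/√8`.
Integrating gives `∫|u₁^m|² = π²/4 + O(m)`, hence `N_m = 2/π + O(m)` and
`N_m u₁^m = (2/π) · profile + O(m) = φ₁⁺ + O(m)`; the bound for `φ₁^{m,-}` is the same one
with the components swapped.
-/

open MeasureTheory Set

/-- `E(m) = √(m² + k(m)²)`. -/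
noncomputable def Efun (k : ℝ → ℝ) (m : ℝ) : ℝ := Real.sqrt (m ^ 2 + (k m) ^ 2)

/-- First component of the (unnormalized) transverse eigenfunction `u₁^m`. -/
noncomputable def ua (k : ℝ → ℝ) (m t : ℝ) : ℝ :=
  k m * Real.cos (k m * (t + 1)) + (Efun k m + m) * Real.sin (k m * (t + 1))

/-- Second component of the (unnormalized) transverse eigenfunction `u₁^m`. -/
noncomputable def ub (k : ℝ → ℝ) (m t : ℝ) : ℝ :=
  k m * Real.cos (k m * (t + 1)) - (Efun k m - m) * Real.sin (k m * (t + 1))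

/-- The normalization constant `N_m = (∫_{-1}^1 |u₁^m|²_{ℂ²} dt)^{-1/2}`. -/
noncomputable def Nfun (k : ℝ → ℝ) (m : ℝ) : ℝ :=
  (Real.sqrt (∫ t in (-1 : ℝ)..1, ((ua k m t) ^ 2 + (ub k m t) ^ 2)))⁻¹

/-- First component of `φ₁⁺`. -/
noncomputable def phiPlus1 (t : ℝ) : ℝ :=
  (1 / 2) * Real.cos (Real.pi * (t + 1) / 4) + (1 / 2) * Real.sin (Real.pi * (t + 1) / 4)

/-- Second component of `φ₁⁺`. -/
noncomputable def phiPlus2 (t : ℝ) : ℝ :=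
  (1 / 2) * Real.cos (Real.pi * (t + 1) / 4) - (1 / 2) * Real.sin (Real.pi * (t + 1) / 4)

open Real

noncomputable def wave (a b θ x : ℝ) : ℝ := a * cos (θ * x) + b * sin (θ * x)

lemma abs_wave_le (a b θ x : ℝ) : |wave a b θ x| ≤ |a| + |b| := by
  calc |wave a b θ x| ≤ |a| * |cos (θ * x)| + |b| * |sin (θ * x)| := by
        rw [← abs_mul, ← abs_mul]; exact abs_add_le _ _
    _ ≤ |a| * 1 + |b| * 1 := by gcongr <;> [exact abs_cos_le_one _; exact abs_sin_le_one _]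
    _ = |a| + |b| := by ring

lemma abs_wave_sub_wave_le (a b θ a' b' θ' x : ℝ) :
    |wave a b θ x - wave a' b' θ' x|
      ≤ |a - a'| + |b - b'| + (|a'| + |b'|) * (|θ - θ'| * |x|) := by
  have hcos := abs_cos_sub_cos_le (θ * x) (θ' * x)
  have hsin := abs_sin_sub_sin_le (θ * x) (θ' * x)
  rw [← sub_mul, abs_mul] at hcos hsin
  have hsplit : wave a b θ x - wave a' b' θ' x = wave (a - a') (b - b') θ x
      + (a' * (cos (θ * x) - cos (θ' * x)) + b' * (sin (θ * x) - sin (θ' * x))) := by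
    unfold wave; ring
  calc |wave a b θ x - wave a' b' θ' x|
      ≤ |wave (a - a') (b - b') θ x|
        + (|a'| * |cos (θ * x) - cos (θ' * x)| + |b'| * |sin (θ * x) - sin (θ' * x)|) := by
        rw [hsplit, ← abs_mul, ← abs_mul]
        exact (abs_add_le _ _).trans (add_le_add_right (abs_add_le _ _) _)
    _ ≤ |a - a'| + |b - b'| + (|a'| * (|θ - θ'| * |x|) + |b'| * (|θ - θ'| * |x|)) := by
        gcongr; exact abs_wave_le _ _ _ _
    _ = _ := by ring

lemma wave_sq_add_wave_neg_sq (c θ x : ℝ) :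
    wave c c θ x ^ 2 + wave c (-c) θ x ^ 2 = 2 * c ^ 2 := by
  unfold wave; linear_combination 2 * c ^ 2 * sin_sq_add_cos_sq (θ * x)

lemma le_pi_div_four_add_of_mul_sin_add_mul_cos_eq_zero {κ m : ℝ} (hm : 0 ≤ m)
    (hκ : π / 4 ≤ κ) (hκ' : κ ≤ π / 2) (h : m * sin (2 * κ) + κ * cos (2 * κ) = 0) :
    κ ≤ π / 4 + m := by
  -- with `x = 2κ - π/2 ∈ [0, π/2]` the equation reads `κ sin x = m cos x ≤ m`, and Jordan's
  -- inequality `2x/π ≤ sin x` turns this into `x ≤ 2m`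
  set x := 2 * κ - π / 2 with hx
  have hsin : sin x = -cos (2 * κ) := by rw [hx, sin_sub_pi_div_two]
  have hcos : cos x = sin (2 * κ) := by rw [hx, cos_sub_pi_div_two]
  have hx₀ : 0 ≤ x := by linarith
  have hjordan : 2 / π * x ≤ sin x := mul_le_sin hx₀ (by linarith)
  have hhalf : 1 / 2 ≤ κ * (2 / π) := by
    rw [mul_div_assoc', le_div_iff₀ pi_pos]; linarith
  have hxm : κ * (2 / π * x) ≤ m :=
    calc κ * (2 / π * x) ≤ κ * sin x := by gcongr; linarith
      _ = m * cos x := by rw [hsin, hcos]; linarith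
      _ ≤ m := mul_le_of_le_one_right hm (cos_le_one x)
  nlinarith

lemma sqrt_sq_add_sq_mem_Icc {a b : ℝ} (ha : 0 ≤ a) (hb : 0 ≤ b) :
    √(a ^ 2 + b ^ 2) ∈ Icc b (b + a) := by
  constructor
  · exact le_sqrt_of_sq_le (by nlinarith)
  · exact sqrt_le_iff.mpr ⟨by positivity, by nlinarith⟩

lemma abs_sq_sub_sq_le {u v δ : ℝ} (h : |u - v| ≤ δ) : |u ^ 2 - v ^ 2| ≤ δ * (2 * |v| + δ) := by
  rw [show u ^ 2 - v ^ 2 = (u - v) * ((u - v) + 2 * v) by ring, abs_mul]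
  gcongr
  · exact (abs_nonneg _).trans h
  · calc |u - v + 2 * v| ≤ |u - v| + |2 * v| := abs_add_le _ _
      _ ≤ 2 * |v| + δ := by rw [abs_mul, abs_two]; linarith

lemma abs_inv_sqrt_sub_inv_le {I c : ℝ} (hI : 1 ≤ I) (hc : 1 ≤ c) :
    |(√I)⁻¹ - c⁻¹| ≤ |I - c ^ 2| := by
  have hs : 1 ≤ √I := one_le_sqrt.mpr hI
  have hfac : I - c ^ 2 = (√I - c) * (√I + c) := by
    have := sq_sqrt (by linarith : 0 ≤ I); linear_combination -this
  have hinv : (√I)⁻¹ - c⁻¹ = (c - √I) * ((√I)⁻¹ * c⁻¹) := by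
    field_simp
  have hsmall : |(√I)⁻¹ * c⁻¹| ≤ 1 := by
    rw [abs_of_nonneg (by positivity)]
    exact mul_le_one₀ (inv_le_one_of_one_le₀ hs) (by positivity) (inv_le_one_of_one_le₀ hc)
  calc |(√I)⁻¹ - c⁻¹| ≤ |c - √I| * 1 := by rw [hinv, abs_mul]; gcongr
    _ ≤ |√I - c| * |√I + c| := by
        rw [abs_sub_comm]; gcongr; rw [abs_of_pos (by linarith)]; linarith
    _ = |I - c ^ 2| := by rw [hfac, abs_mul]

lemma abs_intervalIntegral_sub_le {f : ℝ → ℝ} {a b c δ : ℝ} (hab : a ≤ b)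
    (hf : IntervalIntegrable f volume a b) (h : ∀ x ∈ Icc a b, |f x - c| ≤ δ) :
    |(∫ x in a..b, f x) - (b - a) * c| ≤ δ * (b - a) := by
  have hsub : (∫ x in a..b, f x) - (b - a) * c = ∫ x in a..b, (f x - c) := by
    rw [intervalIntegral.integral_sub hf intervalIntegrable_const,
      intervalIntegral.integral_const, smul_eq_mul]
  have hbound : ∀ x ∈ uIoc a b, ‖f x - c‖ ≤ δ := fun x hx =>
    h x (by rw [← uIcc_of_le hab]; exact uIoc_subset_uIcc hx)
  have := intervalIntegral.norm_integral_le_of_norm_le_const hbound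
  rwa [hsub, ← Real.norm_eq_abs, ← abs_of_nonneg (sub_nonneg.mpr hab)]

lemma sqrt_sq_add_sq_le_abs_add_abs (a b : ℝ) : √(a ^ 2 + b ^ 2) ≤ |a| + |b| :=
  sqrt_le_iff.mpr ⟨by positivity, by nlinarith [sq_abs a, sq_abs b, abs_nonneg a, abs_nonneg b]⟩

lemma abs_mul_sub_mul_le (N c u v : ℝ) : |N * u - c * v| ≤ |N - c| * |u| + |c| * |u - v| := by
  rw [← abs_mul, ← abs_mul, show N * u - c * v = (N - c) * u + c * (u - v) by ring]
  exact abs_add_le _ _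

lemma abs_wave_sub_wave_pi_div_four_le {κ b b₀ m x : ℝ} (hm : 0 ≤ m) (hκ : π / 4 ≤ κ)
    (hκm : κ ≤ π / 4 + m) (hb₀ : |b₀| = π / 4) (hb : |b - b₀| ≤ 3 * m) (hx : |x| ≤ 2) :
    |wave κ b κ x - wave (π / 4) b₀ (π / 4) x| ≤ 8 * m := by
  have hκ' : |κ - π / 4| ≤ m := abs_le.mpr ⟨by linarith, by linarith⟩
  have hπ : |π / 4| + |b₀| ≤ 2 := by
    rw [hb₀, abs_of_pos (by positivity)]; linarith [pi_lt_four]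
  calc |wave κ b κ x - wave (π / 4) b₀ (π / 4) x|
      ≤ |κ - π / 4| + |b - b₀| + (|π / 4| + |b₀|) * (|κ - π / 4| * |x|) :=
        abs_wave_sub_wave_le _ _ _ _ _ _ _
    _ ≤ m + 3 * m + 2 * (m * 2) := by gcongr
    _ = 8 * m := by ring

lemma ua_eq_wave (k : ℝ → ℝ) (m t : ℝ) : ua k m t = wave (k m) (Efun k m + m) (k m) (t + 1) :=
  rfl

lemma ub_eq_wave (k : ℝ → ℝ) (m t : ℝ) : ub k m t = wave (k m) (m - Efun k m) (k m) (t + 1) := by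
  unfold ub wave; ring

lemma phiPlus1_eq_wave (t : ℝ) : phiPlus1 t = 2 / π * wave (π / 4) (π / 4) (π / 4) (t + 1) := by
  unfold phiPlus1 wave; field_simp; ring_nf

lemma phiPlus2_eq_wave (t : ℝ) :
    phiPlus2 t = 2 / π * wave (π / 4) (-(π / 4)) (π / 4) (t + 1) := by
  unfold phiPlus2 wave; field_simp; ring_nf

lemma abs_ua_ub_sub_profile_le {k : ℝ → ℝ} {m t : ℝ} (hm : 0 ≤ m) (hκ : π / 4 ≤ k m)
    (hκm : k m ≤ π / 4 + m) (ht : t ∈ Icc (-1 : ℝ) 1) :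
    |ua k m t - wave (π / 4) (π / 4) (π / 4) (t + 1)| ≤ 8 * m ∧
      |ub k m t - wave (π / 4) (-(π / 4)) (π / 4) (t + 1)| ≤ 8 * m := by
  obtain ⟨hE, hE'⟩ := sqrt_sq_add_sq_mem_Icc hm ((by positivity : (0 : ℝ) ≤ π / 4).trans hκ)
  change k m ≤ Efun k m at hE
  change Efun k m ≤ k m + m at hE'
  have ht' : |t + 1| ≤ 2 := abs_le.mpr ⟨by linarith [ht.1], by linarith [ht.2]⟩
  have hπ : |π / 4| = π / 4 := abs_of_pos (by positivity)
  rw [ua_eq_wave, ub_eq_wave]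
  constructor
  · exact abs_wave_sub_wave_pi_div_four_le hm hκ hκm hπ
      (abs_le.mpr ⟨by linarith, by linarith⟩) ht'
  · exact abs_wave_sub_wave_pi_div_four_le hm hκ hκm (by rw [abs_neg, hπ])
      (abs_le.mpr ⟨by linarith, by linarith⟩) ht'

lemma abs_ua_sq_add_ub_sq_sub_le {k : ℝ → ℝ} {m t : ℝ} (hm : 0 ≤ m) (hm₀ : m ≤ 1 / 400)
    (hκ : π / 4 ≤ k m) (hκm : k m ≤ π / 4 + m) (ht : t ∈ Icc (-1 : ℝ) 1) :
    |ua k m t ^ 2 + ub k m t ^ 2 - π ^ 2 / 8| ≤ 80 * m := by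
  obtain ⟨ha, hb⟩ := abs_ua_ub_sub_profile_le hm hκ hκm ht
  have hπ : |π / 4| = π / 4 := abs_of_pos (by positivity)
  have hprofile (b : ℝ) (hb : |b| = π / 4) : 2 * |wave (π / 4) b (π / 4) (t + 1)| + 8 * m ≤ 5 := by
    have := abs_wave_le (π / 4) b (π / 4) (t + 1)
    rw [hπ, hb] at this
    linarith [pi_lt_four]
  have ha' := (abs_sq_sub_sq_le ha).trans (mul_le_mul_of_nonneg_left (hprofile _ hπ) (by positivity))
  have hb' := (abs_sq_sub_sq_le hb).trans
    (mul_le_mul_of_nonneg_left (hprofile _ (by rw [abs_neg, hπ])) (by positivity))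
  have hconst := wave_sq_add_wave_neg_sq (π / 4) (π / 4) (t + 1)
  calc |ua k m t ^ 2 + ub k m t ^ 2 - π ^ 2 / 8|
      = |(ua k m t ^ 2 - wave (π / 4) (π / 4) (π / 4) (t + 1) ^ 2)
          + (ub k m t ^ 2 - wave (π / 4) (-(π / 4)) (π / 4) (t + 1) ^ 2)| := by
        congr 1; linear_combination hconst
    _ ≤ 8 * m * 5 + 8 * m * 5 := (abs_add_le _ _).trans (add_le_add ha' hb')
    _ = 80 * m := by ring

lemma abs_integral_sub_le {k : ℝ → ℝ} {m : ℝ} (hm : 0 ≤ m) (hm₀ : m ≤ 1 / 400)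
    (hκ : π / 4 ≤ k m) (hκm : k m ≤ π / 4 + m) :
    |(∫ t in (-1 : ℝ)..1, (ua k m t ^ 2 + ub k m t ^ 2)) - π ^ 2 / 4| ≤ 160 * m := by
  have hcont : Continuous fun t => ua k m t ^ 2 + ub k m t ^ 2 := by unfold ua ub; fun_prop
  have := abs_intervalIntegral_sub_le (by norm_num) (hcont.intervalIntegrable _ _)
    fun t ht => abs_ua_sq_add_ub_sq_sub_le hm hm₀ hκ hκm ht
  rwa [show (1 - -1 : ℝ) * (π ^ 2 / 8) = π ^ 2 / 4 by ring,
    show 80 * m * (1 - -1) = 160 * m by ring] at this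

lemma abs_Nfun_sub_le {k : ℝ → ℝ} {m : ℝ} (hm : 0 ≤ m) (hm₀ : m ≤ 1 / 400)
    (hκ : π / 4 ≤ k m) (hκm : k m ≤ π / 4 + m) :
    |Nfun k m - 2 / π| ≤ 160 * m := by
  have hI := abs_integral_sub_le hm hm₀ hκ hκm
  have hπ : 9.8 ≤ π ^ 2 := by nlinarith [pi_gt_d2]
  have hI₁ : 1 ≤ ∫ t in (-1 : ℝ)..1, (ua k m t ^ 2 + ub k m t ^ 2) := by
    linarith [(abs_le.mp hI).1]
  have := abs_inv_sqrt_sub_inv_le hI₁ (c := π / 2) (by linarith [pi_gt_three])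
  rw [inv_div, div_pow, show (2 : ℝ) ^ 2 = 4 by norm_num] at this
  exact this.trans hI

lemma abs_Nfun_mul_sub_phiPlus_le {k : ℝ → ℝ} {m t : ℝ} (hm : 0 ≤ m) (hm₀ : m ≤ 1 / 400)
    (hκ : π / 4 ≤ k m) (hκm : k m ≤ π / 4 + m) (ht : t ∈ Icc (-1 : ℝ) 1) :
    |Nfun k m * ua k m t - phiPlus1 t| ≤ 500 * m ∧
      |Nfun k m * ub k m t - phiPlus2 t| ≤ 500 * m := by
  have hN := abs_Nfun_sub_le hm hm₀ hκ hκm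
  have hc : |2 / π| ≤ 1 := by
    rw [abs_of_pos (by positivity), div_le_one pi_pos]; linarith [pi_gt_three]
  have hπ : |π / 4| = π / 4 := abs_of_pos (by positivity)
  have hcomponent {u b : ℝ} (hb : |b| = π / 4)
      (hu : |u - wave (π / 4) b (π / 4) (t + 1)| ≤ 8 * m) :
      |Nfun k m * u - 2 / π * wave (π / 4) b (π / 4) (t + 1)| ≤ 500 * m := by
    have hv := abs_wave_le (π / 4) b (π / 4) (t + 1)
    rw [hπ, hb] at hv
    have hu' : |u| ≤ 3 := by
      linarith [abs_sub_abs_le_abs_sub u (wave (π / 4) b (π / 4) (t + 1)), pi_lt_four]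
    calc _ ≤ |Nfun k m - 2 / π| * |u| + |2 / π| * |u - wave (π / 4) b (π / 4) (t + 1)| :=
          abs_mul_sub_mul_le _ _ _ _
      _ ≤ 160 * m * 3 + 1 * (8 * m) := by gcongr
      _ ≤ 500 * m := by linarith
  obtain ⟨ha, hb⟩ := abs_ua_ub_sub_profile_le hm hκ hκm ht
  rw [phiPlus1_eq_wave, phiPlus2_eq_wave]
  exact ⟨hcomponent hπ ha, hcomponent (by rw [abs_neg, hπ]) hb⟩

/-- The normalized transverse eigenfunctions
`φ₁^{m,+} = N_m u₁^m` and `φ₁^{m,-} = σ₁ φ₁^{m,+}` satisfy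
`φ₁^{m,±} = φ₁^± + O(m)` uniformly on `[-1,1]` as `m → 0⁺`. -/
theorem eigenfunction_asymptotics
    (k : ℝ → ℝ)
    (hk : ∀ m : ℝ, 0 ≤ m → k m ∈ Ico (Real.pi / 4) (Real.pi / 2) ∧
      m * Real.sin (2 * k m) + k m * Real.cos (2 * k m) = 0) :
    ∃ C > 0, ∃ m₀ > 0, ∀ m ∈ Icc (0 : ℝ) m₀, ∀ t ∈ Icc (-1 : ℝ) 1,
      Real.sqrt ((Nfun k m * ua k m t - phiPlus1 t) ^ 2
        + (Nfun k m * ub k m t - phiPlus2 t) ^ 2) ≤ C * m ∧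
      Real.sqrt ((Nfun k m * ub k m t - phiPlus2 t) ^ 2
        + (Nfun k m * ua k m t - phiPlus1 t) ^ 2) ≤ C * m := by
  refine ⟨1000, by norm_num, 1 / 400, by norm_num, fun m ⟨hm, hm₀⟩ t ht => ?_⟩
  obtain ⟨⟨hκ, hκ'⟩, hdispersion⟩ := hk m hm
  have hκm := le_pi_div_four_add_of_mul_sin_add_mul_cos_eq_zero hm hκ hκ'.le hdispersion
  obtain ⟨h₁, h₂⟩ := abs_Nfun_mul_sub_phiPlus_le hm hm₀ hκ hκm ht
  exact ⟨(sqrt_sq_add_sq_le_abs_add_abs _ _).trans (by linarith),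
    (sqrt_sq_add_sq_le_abs_add_abs _ _).trans (by linarith)⟩
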